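/- arXiv:1510.06231 — 6 statements merged into one kernel-verified Lean document; each statement's English description precedes it below -/
import Mathlib

section
/- Decryption inverts encryption in 2PAD: for prime p ≥ 5, key (x,y) ∈ Z_p × Z_p, message m ∈ Z_p, randomness z ∈ Z_p \ {0}, let b = (p*m + z) mod p² and c = (p*x*b² + p*y*b + b) mod p². Then with z' = c mod p and t = (p*(p-x)*z'² + p*(p-y)*z' + c) mod p², one has t ≡ z' (mod p) and (t - z')/p = m (as integers in {0,...,p-1}). -/
/-!
Modulo `p²` the masking term `p * (x * b² + y * b)` depends only on `b mod p`, since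
`p * b ≡ p * z (mod p²)` whenever `b ≡ z (mod p)`. The key `(p - x, p - y)` evaluated at
`c mod p = b mod p` therefore cancels it exactly, so decryption returns the blinded value
`b = p * m + z`, from which `z = b mod p` and `m = b / p` are read off.
-/

namespace TwoPad

def encrypt (p x y b : ℕ) : ℕ := (p * x * b ^ 2 + p * y * b + b) % p ^ 2

def decrypt (p x y c : ℕ) : ℕ := (p * (p - x) * (c % p) ^ 2 + p * (p - y) * (c % p) + c) % p ^ 2

variable {p x y : ℕ}

theorem encrypt_mod (b : ℕ) : encrypt p x y b % p = b % p := by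
  rw [encrypt, Nat.mod_mod_of_dvd _ (dvd_pow_self p two_ne_zero),
    show p * x * b ^ 2 + p * y * b + b = p * (x * b ^ 2 + y * b) + b by ring, Nat.mul_add_mod]

theorem unmask_modEq (hx : x ≤ p) (hy : y ≤ p) {b z : ℕ} (hbz : b ≡ z [MOD p]) :
    p * (p - x) * z ^ 2 + p * (p - y) * z + (p * x * b ^ 2 + p * y * b + b) ≡ b [MOD p ^ 2] := by
  have hpb : (p : ZMod (p ^ 2)) * b = p * z := by
    have := hbz.mul_left' p
    rw [← sq] at this
    exact_mod_cast (ZMod.natCast_eq_natCast_iff _ _ _).2 this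
  have hp2 : (p : ZMod (p ^ 2)) ^ 2 = 0 := by exact_mod_cast ZMod.natCast_self (p ^ 2)
  rw [← ZMod.natCast_eq_natCast_iff]
  push_cast [Nat.cast_sub hx, Nat.cast_sub hy]
  linear_combination (x * (b + z) + y) * hpb + (z ^ 2 + z) * hp2

theorem decrypt_encrypt (hx : x ≤ p) (hy : y ≤ p) {b : ℕ} (hb : b < p ^ 2) :
    decrypt p x y (encrypt p x y b) = b := by
  have hunmask := unmask_modEq hx hy (Nat.mod_modEq b p).symm
  rw [decrypt, encrypt_mod]
  exact Eq.trans (((Nat.mod_modEq _ _).add_left _).trans hunmask) (Nat.mod_eq_of_lt hb)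

end TwoPad

theorem stmt_1_general (p x y m z : ℕ)
    (hx : x < p) (hy : y < p) (hm : m < p) (hz : z < p)
    (b c z' t : ℕ)
    (hb : b = (p * m + z) % p ^ 2)
    (hc : c = (p * x * b ^ 2 + p * y * b + b) % p ^ 2)
    (hz' : z' = c % p)
    (ht : t = (p * (p - x) * z' ^ 2 + p * (p - y) * z' + c) % p ^ 2) :
    t % p = z' ∧ (t - z') / p = m := by
  have hlt : p * m + z < p ^ 2 := sq p ▸ Nat.mul_add_lt_mul_of_lt_of_lt hm hz
  have hb' : b = p * m + z := hb.trans (Nat.mod_eq_of_lt hlt)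
  have hc' : c = TwoPad.encrypt p x y b := hc
  have hz'' : z' = z := by
    rw [hz', hc', TwoPad.encrypt_mod, hb', Nat.mul_add_mod, Nat.mod_eq_of_lt hz]
  have ht' : t = p * m + z := by
    rw [ht, hz', hc', ← TwoPad.decrypt, TwoPad.decrypt_encrypt hx.le hy.le (hb' ▸ hlt), hb']
  rw [ht', hz'', Nat.mul_add_mod, Nat.mod_eq_of_lt hz, Nat.add_sub_cancel,
    Nat.mul_div_cancel_left m (by omega)]
  exact ⟨rfl, rfl⟩

theorem stmt_1 (p x y m z : ℕ) (hp : p.Prime) (hp5 : 5 ≤ p)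
    (hx : x < p) (hy : y < p) (hm : m < p) (hz : z < p) (hz0 : z ≠ 0)
    (b c z' t : ℕ)
    (hb : b = (p * m + z) % p ^ 2)
    (hc : c = (p * x * b ^ 2 + p * y * b + b) % p ^ 2)
    (hz' : z' = c % p)
    (ht : t = (p * (p - x) * z' ^ 2 + p * (p - y) * z' + c) % p ^ 2) :
    t % p = z' ∧ (t - z') / p = m :=
  stmt_1_general p x y m z hx hy hm hz b c z' t hb hc hz' ht
end

section
/- Correctness of the Map algorithm: for prime p ≥ 5, key (x,y), and messages m₁, m₂ ∈ Z_p encrypted with the same randomness class z ∈ Z_p \ {0}, i.e., c₁ ≡ p*x*z² + p*y*z + p*m₁ + z (mod p²) and c₂ ≡ p*x*z² + p*y*z + p*m₂ + z (mod p²), the integer (c₂ - c₁ + p*m₁)/p taken modulo p equals m₂. -/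
/-! The two ciphertexts carry the same mask `p x z² + p y z + z`, so
`c₂ - c₁ + p m₁ ≡ p m₂ (mod p²)`; an integer congruent to `p m₂` modulo `p²`
is divisible by `p` with quotient `≡ m₂ (mod p)`. -/

theorem Int.ediv_emod_eq_of_modEq_mul_sq {a m p : ℤ} (hp : p ≠ 0)
    (h : a ≡ p * m [ZMOD p ^ 2]) : a / p % p = m % p := by
  obtain ⟨k, hk⟩ := Int.modEq_iff_dvd.mp h.symm
  have ha : a = p * (m + p * k) := by linear_combination hk
  rw [ha, Int.mul_ediv_cancel_left _ hp, Int.add_mul_emod_self_left]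

theorem Int.sub_add_modEq_of_modEq_add_mul {n p e m₁ m₂ c₁ c₂ : ℤ}
    (hc₁ : c₁ ≡ e + p * m₁ [ZMOD n]) (hc₂ : c₂ ≡ e + p * m₂ [ZMOD n]) :
    c₂ - c₁ + p * m₁ ≡ p * m₂ [ZMOD n] := by
  simpa using (hc₂.sub hc₁).add_right (p * m₁)

theorem stmt_3_general (p x y m₁ m₂ z c₁ c₂ : ℤ)
    (hm₂ : 0 ≤ m₂ ∧ m₂ < p)
    (hc₁ : c₁ ≡ p * x * z ^ 2 + p * y * z + p * m₁ + z [ZMOD p ^ 2])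
    (hc₂ : c₂ ≡ p * x * z ^ 2 + p * y * z + p * m₂ + z [ZMOD p ^ 2]) :
    ((c₂ - c₁ + p * m₁) / p) % p = m₂ := by
  have hp : p ≠ 0 := by omega
  have hmask (m : ℤ) : p * x * z ^ 2 + p * y * z + p * m + z
      = (p * x * z ^ 2 + p * y * z + z) + p * m := by ring
  rw [hmask] at hc₁ hc₂
  rw [Int.ediv_emod_eq_of_modEq_mul_sq hp (Int.sub_add_modEq_of_modEq_add_mul hc₁ hc₂),
    Int.emod_eq_of_lt hm₂.1 hm₂.2]

theorem stmt_3 (p x y m₁ m₂ z c₁ c₂ : ℤ) (hp : Prime p) (hp5 : 5 ≤ p)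
    (hm₁ : 0 ≤ m₁ ∧ m₁ < p) (hm₂ : 0 ≤ m₂ ∧ m₂ < p)
    (hz : 0 < z ∧ z < p)
    (hc₁ : c₁ ≡ p * x * z ^ 2 + p * y * z + p * m₁ + z [ZMOD p ^ 2])
    (hc₂ : c₂ ≡ p * x * z ^ 2 + p * y * z + p * m₂ + z [ZMOD p ^ 2]) :
    ((c₂ - c₁ + p * m₁) / p) % p = m₂ :=
  stmt_3_general p x y m₁ m₂ z c₁ c₂ hm₂ hc₁ hc₂
end

section
/- For each prime p ≥ 5 and each pair of plaintext-ciphertext pairs (m₁, c₁), (m₂, c₂) ∈ Z_p × Z_{p²} such that c₁ mod p ≠ 0, c₂ mod p ≠ 0, and c₁ ≢ c₂ (mod p), there is exactly one key (x, y) ∈ Z_p × Z_p such that c₁ ≡ p*x*z₁² + p*y*z₁ + p*m₁ + z₁ (mod p²) and c₂ ≡ p*x*z₂² + p*y*z₂ + p*m₂ + z₂ (mod p²), where z₁ = c₁ mod p and z₂ = c₂ mod p. -/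
/-!
Write `z = c mod p` and `c = p * (c / p) + z`. Modulo `p²` the encryption congruence only
constrains the high digit: `c / p ≡ x z² + y z + m (mod p)`. So the key is a pair `(x, y)` with
`x z_i² + y z_i = c_i / p - m_i` in `𝔽_p` for `i = 1, 2`, a linear system whose determinant
`z₁ z₂ (z₁ - z₂)` is nonzero precisely because the `z_i` are nonzero and distinct.
-/

theorem existsUnique_sq_mul_add_mul_add_eq {F : Type*} [Field F] {z₁ z₂ : F}
    (h₁ : z₁ ≠ 0) (h₂ : z₂ ≠ 0) (hne : z₁ ≠ z₂) (w₁ w₂ m₁ m₂ : F) :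
    ∃! k : F × F, w₁ = k.1 * z₁ ^ 2 + k.2 * z₁ + m₁ ∧ w₂ = k.1 * z₂ ^ 2 + k.2 * z₂ + m₂ := by
  have hsub : z₁ - z₂ ≠ 0 := sub_ne_zero.mpr hne
  refine existsUnique_of_exists_of_unique ?_ ?_
  · set b₁ := w₁ - m₁
    set b₂ := w₂ - m₂
    refine ⟨((b₁ * z₂ - b₂ * z₁) / (z₁ * z₂ * (z₁ - z₂)),
      (b₂ * z₁ ^ 2 - b₁ * z₂ ^ 2) / (z₁ * z₂ * (z₁ - z₂))), ?_, ?_⟩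
    · field_simp
      ring
    · field_simp
      ring
  · rintro ⟨x, y⟩ ⟨x', y'⟩ ⟨e₁, e₂⟩ ⟨e₁', e₂'⟩
    -- The difference `(u, v)` of two solutions has `u z + v = 0` at both (nonzero) nodes.
    have hl₁ : (x - x') * z₁ + (y - y') = 0 := by
      refine (mul_eq_zero.mp ?_).resolve_left h₁
      linear_combination e₁' - e₁
    have hl₂ : (x - x') * z₂ + (y - y') = 0 := by
      refine (mul_eq_zero.mp ?_).resolve_left h₂
      linear_combination e₂' - e₂
    have hx : x - x' = 0 :=
      (mul_eq_zero.mp (by linear_combination hl₁ - hl₂)).resolve_right hsub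
    have hy : y - y' = 0 := by linear_combination hl₁ - z₁ * hx
    exact Prod.ext (sub_eq_zero.mp hx) (sub_eq_zero.mp hy)

theorem Nat.modEq_mul_add_mod_iff {p : ℕ} (hp : p ≠ 0) (c a : ℕ) :
    c ≡ p * a + c % p [MOD p ^ 2] ↔ c / p ≡ a [MOD p] := by
  nth_rw 1 [← Nat.div_add_mod c p]
  rw [Nat.ModEq.add_iff_right Nat.ModEq.rfl, sq, Nat.ModEq.mul_left_cancel_iff' hp]

theorem modEq_encrypt_iff_zmod {p : ℕ} (hp : p ≠ 0) (c x y m : ℕ) :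
    c ≡ p * x * (c % p) ^ 2 + p * y * (c % p) + p * m + c % p [MOD p ^ 2] ↔
      ((c / p : ℕ) : ZMod p) = x * (c : ZMod p) ^ 2 + y * c + m := by
  rw [show p * x * (c % p) ^ 2 + p * y * (c % p) + p * m + c % p
      = p * (x * (c % p) ^ 2 + y * (c % p) + m) + c % p by ring,
    Nat.modEq_mul_add_mod_iff hp, ← ZMod.natCast_eq_natCast_iff]
  push_cast
  rw [ZMod.natCast_mod]

theorem existsUnique_natPair_lt_of_zmod {p : ℕ} [NeZero p] {P : ZMod p → ZMod p → Prop}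
    (h : ∃! k : ZMod p × ZMod p, P k.1 k.2) :
    ∃! k : ℕ × ℕ, k.1 < p ∧ k.2 < p ∧ P k.1 k.2 := by
  obtain ⟨⟨x, y⟩, hxy, huniq⟩ := h
  refine ⟨(x.val, y.val), ⟨x.val_lt, y.val_lt, by simpa only [ZMod.natCast_zmod_val]⟩, ?_⟩
  rintro ⟨a, b⟩ ⟨ha, hb, hab⟩
  obtain ⟨rfl, rfl⟩ := Prod.ext_iff.mp (huniq ((a : ZMod p), (b : ZMod p)) hab)
  simp only [ZMod.val_cast_of_lt ha, ZMod.val_cast_of_lt hb]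

theorem stmt_7_general (p m₁ m₂ c₁ c₂ : ℕ) (hp : p.Prime)
    (hz₁ : c₁ % p ≠ 0) (hz₂ : c₂ % p ≠ 0) (hne : c₁ % p ≠ c₂ % p) :
    ∃! k : ℕ × ℕ, k.1 < p ∧ k.2 < p ∧
      c₁ ≡ p * k.1 * (c₁ % p) ^ 2 + p * k.2 * (c₁ % p) + p * m₁ + c₁ % p [MOD p ^ 2] ∧
      c₂ ≡ p * k.1 * (c₂ % p) ^ 2 + p * k.2 * (c₂ % p) + p * m₂ + c₂ % p [MOD p ^ 2] := by
  have : Fact p.Prime := ⟨hp⟩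
  simp only [modEq_encrypt_iff_zmod hp.ne_zero]
  apply existsUnique_natPair_lt_of_zmod (P := fun x y : ZMod p ↦
    ((c₁ / p : ℕ) : ZMod p) = x * c₁ ^ 2 + y * c₁ + m₁ ∧
      ((c₂ / p : ℕ) : ZMod p) = x * c₂ ^ 2 + y * c₂ + m₂)
  refine existsUnique_sq_mul_add_mul_add_eq ?_ ?_ ?_ _ _ _ _
  · rwa [Ne, ZMod.natCast_eq_zero_iff, Nat.dvd_iff_mod_eq_zero]
  · rwa [Ne, ZMod.natCast_eq_zero_iff, Nat.dvd_iff_mod_eq_zero]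
  · rwa [Ne, ZMod.natCast_eq_natCast_iff']

theorem stmt_7 (p m₁ m₂ c₁ c₂ : ℕ) (hp : p.Prime) (hp5 : 5 ≤ p)
    (hm₁ : m₁ < p) (hm₂ : m₂ < p) (hc₁ : c₁ < p ^ 2) (hc₂ : c₂ < p ^ 2)
    (hz₁ : c₁ % p ≠ 0) (hz₂ : c₂ % p ≠ 0) (hne : c₁ % p ≠ c₂ % p) :
    ∃! k : ℕ × ℕ, k.1 < p ∧ k.2 < p ∧
      c₁ ≡ p * k.1 * (c₁ % p) ^ 2 + p * k.2 * (c₁ % p) + p * m₁ + c₁ % p [MOD p ^ 2] ∧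
      c₂ ≡ p * k.1 * (c₂ % p) ^ 2 + p * k.2 * (c₂ % p) + p * m₂ + c₂ % p [MOD p ^ 2] :=
  stmt_7_general p m₁ m₂ c₁ c₂ hp hz₁ hz₂ hne
end

section
/- Perfect leak-freeness counting lemma: for prime p ≥ 5, fix c₁, c₂ ∈ Z_{p²} with z₁ = c₁ mod p ≠ 0, z₂ = c₂ mod p ≠ 0, z₁ ≠ z₂, and fix m₁ ∈ Z_p. Then for every m ∈ Z_p, the number of keys (x,y) ∈ Z_p × Z_p such that c₁ is the 2PAD encryption of m₁ under (x,y) with randomness z₁ and c₂ is the 2PAD encryption of m under (x,y) with randomness z₂ is exactly 1; in particular this count is independent of m. -/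
/-!
Write `c = p * q + z` with `z = c mod p`. Modulo `p²` the 2PAD condition
`c ≡ p x z² + p y z + p m + z` only sees `q mod p`, and becomes `q = x z² + y z + m` in `𝔽_p`.
The two conditions are then a linear system in the key `(x, y)` with determinant
`z₁ z₂ (z₁ - z₂) ≠ 0`, so exactly one key satisfies both.
-/

theorem Nat.mod_sq_eq_mul_add_mod_iff {p : ℕ} (hp : 0 < p) (c t : ℕ) :
    c % p ^ 2 = (p * t + c % p) % p ^ 2 ↔ ((c / p : ℕ) : ZMod p) = t := by
  have hdiv : (p * t + c % p) / p = t := by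
    rw [Nat.mul_add_div hp, Nat.div_eq_of_lt (Nat.mod_lt c hp), add_zero]
  rw [sq, Nat.mod_mul, Nat.mod_mul (x := p * t + c % p), Nat.mul_add_mod, Nat.mod_mod, hdiv,
    add_right_inj, Nat.mul_left_cancel_iff hp, ZMod.natCast_eq_natCast_iff']

theorem existsUnique_mul_sq_add_mul_add {F : Type*} [Field F] {z₁ z₂ : F} (h₁ : z₁ ≠ 0)
    (h₂ : z₂ ≠ 0) (h : z₁ ≠ z₂) (a₁ a₂ b₁ b₂ : F) :
    ∃! k : F × F, a₁ = k.1 * z₁ ^ 2 + k.2 * z₁ + b₁ ∧ a₂ = k.1 * z₂ ^ 2 + k.2 * z₂ + b₂ := by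
  have h₁₂ : z₁ - z₂ ≠ 0 := sub_ne_zero.mpr h
  set x := ((a₁ - b₁) / z₁ - (a₂ - b₂) / z₂) / (z₁ - z₂)
  refine ⟨(x, (a₁ - b₁) / z₁ - x * z₁), ⟨?_, ?_⟩, ?_⟩
  · field_simp
    ring
  · simp only [x]
    field_simp
    ring
  · rintro ⟨x', y'⟩ ⟨e₁, e₂⟩
    have hx : x' = x := by
      simp only [x]
      field_simp
      linear_combination z₁ * e₂ - z₂ * e₁
    subst hx
    simp only [Prod.mk.injEq, true_and]
    field_simp
    linear_combination -e₁

theorem ZMod.card_filter_range_prod_range_eq_one {p : ℕ} [NeZero p] {P : ℕ × ℕ → Prop}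
    [DecidablePred P] {Q : ZMod p × ZMod p → Prop} (hPQ : ∀ k, P k ↔ Q (k.1, k.2))
    (hQ : ∃! q, Q q) : ((Finset.range p ×ˢ Finset.range p).filter P).card = 1 := by
  obtain ⟨q, hq, hq_unique⟩ := hQ
  rw [Finset.card_eq_one]
  refine ⟨(q.1.val, q.2.val), Finset.ext fun k => ?_⟩
  simp only [Finset.mem_filter, Finset.mem_product, Finset.mem_range, Finset.mem_singleton, hPQ]
  constructor
  · rintro ⟨⟨hk₁, hk₂⟩, hk⟩
    rw [← hq_unique _ hk, ZMod.val_cast_of_lt hk₁, ZMod.val_cast_of_lt hk₂]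
  · rintro rfl
    simpa using ⟨⟨q.1.val_lt, q.2.val_lt⟩, hq⟩

theorem Nat.mod_sq_eq_encrypt_iff {p : ℕ} (hp : 0 < p) (c x y m : ℕ) :
    c % p ^ 2 = (p * x * (c % p) ^ 2 + p * y * (c % p) + p * m + c % p) % p ^ 2 ↔
      ((c / p : ℕ) : ZMod p) = x * (c : ZMod p) ^ 2 + y * c + m := by
  rw [show p * x * (c % p) ^ 2 + p * y * (c % p) + p * m + c % p
      = p * (x * (c % p) ^ 2 + y * (c % p) + m) + c % p by ring,
    Nat.mod_sq_eq_mul_add_mod_iff hp]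
  push_cast [ZMod.natCast_mod]
  rfl

theorem stmt_8_general (p m₁ c₁ c₂ : ℕ) (hp : p.Prime)
    (hz₁ : c₁ % p ≠ 0) (hz₂ : c₂ % p ≠ 0) (hne : c₁ % p ≠ c₂ % p) :
    ∀ m : ℕ, m < p →
      ((Finset.range p ×ˢ Finset.range p).filter (fun k =>
        c₁ % p ^ 2 = (p * k.1 * (c₁ % p) ^ 2 + p * k.2 * (c₁ % p) + p * m₁ + c₁ % p) % p ^ 2 ∧
        c₂ % p ^ 2 = (p * k.1 * (c₂ % p) ^ 2 + p * k.2 * (c₂ % p) + p * m + c₂ % p) % p ^ 2)).card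
        = 1 := by
  intro m _
  have : Fact p.Prime := ⟨hp⟩
  have hZ₁ : (c₁ : ZMod p) ≠ 0 := by
    rwa [Ne, ZMod.natCast_eq_zero_iff, Nat.dvd_iff_mod_eq_zero]
  have hZ₂ : (c₂ : ZMod p) ≠ 0 := by
    rwa [Ne, ZMod.natCast_eq_zero_iff, Nat.dvd_iff_mod_eq_zero]
  have hZ : (c₁ : ZMod p) ≠ c₂ := by
    rwa [Ne, ZMod.natCast_eq_natCast_iff']
  refine ZMod.card_filter_range_prod_range_eq_one (fun k => ?_)
    (existsUnique_mul_sq_add_mul_add hZ₁ hZ₂ hZ ((c₁ / p : ℕ)) ((c₂ / p : ℕ)) m₁ m)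
  simp only [Nat.mod_sq_eq_encrypt_iff hp.pos]

theorem stmt_8 (p m₁ c₁ c₂ : ℕ) (hp : p.Prime) (hp5 : 5 ≤ p)
    (hm₁ : m₁ < p) (hc₁ : c₁ < p ^ 2) (hc₂ : c₂ < p ^ 2)
    (hz₁ : c₁ % p ≠ 0) (hz₂ : c₂ % p ≠ 0) (hne : c₁ % p ≠ c₂ % p) :
    ∀ m : ℕ, m < p →
      ((Finset.range p ×ˢ Finset.range p).filter (fun k =>
        c₁ % p ^ 2 = (p * k.1 * (c₁ % p) ^ 2 + p * k.2 * (c₁ % p) + p * m₁ + c₁ % p) % p ^ 2 ∧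
        c₂ % p ^ 2 = (p * k.1 * (c₂ % p) ^ 2 + p * k.2 * (c₂ % p) + p * m + c₂ % p) % p ^ 2)).card
        = 1 :=
  stmt_8_general p m₁ c₁ c₂ hp hz₁ hz₂ hne
end

section
/- Blind decryption protocol correctness: for prime p ≥ 5, key (x, y) ∈ Z_p × Z_p, message m ∈ Z_p, randomness z ∈ Z_p \ {0}, let c = (p*x*z² + p*y*z + p*m + z) mod p², c' = c mod p, and m' = ((-x)*c'² + (-y)*c') mod p. Then Map(c', m', c) := ((c - c' + p*m') / p) mod p equals m. -/
/-!
Since `z < p`, the ciphertext is `c = p * q + z` with `q ≡ x z² + y z + m (mod p)`, so `c' = z`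
and `(c - c') / p = q`. Decrypting `c' = z` gives `m' ≡ -x z² - y z`, and therefore
`q + m' ≡ m (mod p)`: the key-dependent terms cancel.
-/

namespace SymmetricBlind

def enc (p x y m z : ℕ) : ℕ := (p * x * z ^ 2 + p * y * z + p * m + z) % p ^ 2

/-- `(p - x) % p` is the representative of `-x` in `{0, …, p - 1}`. -/
def dec (p x y c : ℕ) : ℕ := ((p - x) % p * c ^ 2 + (p - y) % p * c) % p

def map (p c₁ m₁ c₂ : ℕ) : ℕ := (c₂ - c₁ + p * m₁) / p % p

theorem mul_add_mod_mul_self {p a z : ℕ} (hz : z < p) :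
    (p * a + z) % (p * p) = p * (a % p) + z := by
  rw [Nat.mod_mul, Nat.mul_add_mod, Nat.mod_eq_of_lt hz, Nat.mul_add_div (by omega),
    Nat.div_eq_of_lt hz, add_zero, add_comm]

theorem enc_eq {p x y m z : ℕ} (hz : z < p) :
    enc p x y m z = p * ((x * z ^ 2 + y * z + m) % p) + z := by
  rw [enc, ← mul_add_mod_mul_self hz, sq p]
  ring_nf

theorem enc_mod {p x y m z : ℕ} (hz : z < p) : enc p x y m z % p = z := by
  rw [enc_eq hz, Nat.mul_add_mod, Nat.mod_eq_of_lt hz]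

theorem enc_div {p x y m z : ℕ} (hz : z < p) :
    enc p x y m z / p = (x * z ^ 2 + y * z + m) % p := by
  rw [enc_eq hz, Nat.mul_add_div (by omega), Nat.div_eq_of_lt hz, add_zero]

theorem map_mod_left {p : ℕ} (hp : 0 < p) (m₁ c : ℕ) :
    map p (c % p) m₁ c = (c / p + m₁) % p := by
  have hsub : c - c % p = p * (c / p) := by
    have := Nat.div_add_mod c p
    omega
  rw [map, hsub, ← mul_add, Nat.mul_div_cancel_left _ hp]

theorem natCast_dec {p x y : ℕ} (hx : x ≤ p) (hy : y ≤ p) (c : ℕ) :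
    (dec p x y c : ZMod p) = -x * c ^ 2 - y * c := by
  simp only [dec, ZMod.natCast_mod, Nat.cast_add, Nat.cast_mul, Nat.cast_pow,
    Nat.cast_sub hx, Nat.cast_sub hy, ZMod.natCast_self]
  ring

theorem map_dec_enc {p x y m z : ℕ} (hx : x ≤ p) (hy : y ≤ p) (hm : m < p) (hz : z < p) :
    let c := enc p x y m z
    map p (c % p) (dec p x y (c % p)) c = m := by
  intro c
  have hp : 0 < p := by omega
  rw [map_mod_left hp, enc_mod hz, enc_div hz, ← Nat.mod_eq_of_lt hm,
    ← ZMod.natCast_eq_natCast_iff']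
  push_cast [ZMod.natCast_mod, natCast_dec hx hy]
  ring

end SymmetricBlind

theorem stmt_13_general (p x y m z : ℕ)
    (hx : x < p) (hy : y < p) (hm : m < p) (hz : z < p)
    (c c' m' : ℕ)
    (hc : c = (p * x * z ^ 2 + p * y * z + p * m + z) % p ^ 2)
    (hc' : c' = c % p)
    (hm' : m' = (((p - x) % p) * c' ^ 2 + ((p - y) % p) * c') % p) :
    ((c - c' + p * m') / p) % p = m := by
  subst hc hc' hm'
  exact SymmetricBlind.map_dec_enc hx.le hy.le hm hz

theorem stmt_13 (p x y m z : ℕ) (hp : p.Prime) (hp5 : 5 ≤ p)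
    (hx : x < p) (hy : y < p) (hm : m < p) (hz : z < p) (hz0 : z ≠ 0)
    (c c' m' : ℕ)
    (hc : c = (p * x * z ^ 2 + p * y * z + p * m + z) % p ^ 2)
    (hc' : c' = c % p)
    (hm' : m' = (((p - x) % p) * c' ^ 2 + ((p - y) % p) * c') % p) :
    ((c - c' + p * m') / p) % p = m :=
  stmt_13_general p x y m z hx hy hm hz c c' m' hc hc' hm'
end

section
/- Knowing one plaintext-ciphertext pair (m₁, c₁) of 2PAD determines the decryption of every ciphertext c₂ with c₂ ≡ c₁ (mod p): if c₁ and c₂ are both valid encryptions under the same key (x,y) with the same randomness z = c₁ mod p = c₂ mod p ≠ 0, of messages m₁ and m₂ respectively, then m₂ ≡ m₁ + (c₂ - c₁)/p (mod p). -/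
/-! Under a fixed key and randomness `z`, two ciphertexts differ modulo `p²` by exactly
`p * (m₂ - m₁)`: everything except the message term cancels. Dividing that difference
by `p` therefore recovers `m₂ - m₁` modulo `p`. -/

theorem Int.ediv_modEq_of_modEq_mul_sq {p a d : ℤ} (hp : p ≠ 0) (h : a ≡ p * d [ZMOD p ^ 2]) :
    a / p ≡ d [ZMOD p] := by
  have hpa : p ∣ a := by
    have hmod : a % p = p * d % p := h.of_dvd (dvd_pow_self p two_ne_zero)
    rw [Int.mul_emod_right] at hmod
    exact Int.dvd_of_emod_eq_zero hmod
  refine Int.ModEq.mul_left_cancel' hp ?_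
  rwa [Int.mul_ediv_cancel' hpa, ← sq]

theorem stmt_15_general (p x y m₁ m₂ z c₁ c₂ : ℤ) (hp : Prime p)
    (hc₁ : c₁ ≡ p * x * z ^ 2 + p * y * z + p * m₁ + z [ZMOD p ^ 2])
    (hc₂ : c₂ ≡ p * x * z ^ 2 + p * y * z + p * m₂ + z [ZMOD p ^ 2]) :
    m₂ ≡ m₁ + (c₂ - c₁) / p [ZMOD p] := by
  have hdiff : c₂ - c₁ ≡ p * (m₂ - m₁) [ZMOD p ^ 2] := by
    convert hc₂.sub hc₁ using 1
    ring
  calc m₂ = m₁ + (m₂ - m₁) := by ring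
    _ ≡ m₁ + (c₂ - c₁) / p [ZMOD p] :=
      (Int.ediv_modEq_of_modEq_mul_sq hp.ne_zero hdiff).symm.add_left m₁

theorem stmt_15 (p x y m₁ m₂ z c₁ c₂ : ℤ) (hp : Prime p) (hp5 : 5 ≤ p)
    (hm₁ : 0 ≤ m₁ ∧ m₁ < p) (hm₂ : 0 ≤ m₂ ∧ m₂ < p)
    (hz : 0 < z ∧ z < p) (hz₁ : z = c₁ % p) (hz₂ : z = c₂ % p)
    (hc₁ : c₁ ≡ p * x * z ^ 2 + p * y * z + p * m₁ + z [ZMOD p ^ 2])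
    (hc₂ : c₂ ≡ p * x * z ^ 2 + p * y * z + p * m₂ + z [ZMOD p ^ 2]) :
    m₂ ≡ m₁ + (c₂ - c₁) / p [ZMOD p] :=
  stmt_15_general p x y m₁ m₂ z c₁ c₂ hp hc₁ hc₂
end
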